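/- Let α ∈ (0,2). There exists a constant C > 0, depending only on α, such that for every h > 0, every n ∈ {0,1}, and all integers i,j ≥ 1 with i+j ≥ 3, writing ξ_i = ih, η_j = jh, I_{ij} = [ih,(i+1)h]×[jh,(j+1)h], and letting Θ^{(1,n)}_{I_{ab}} be built from the weight w(ξ,η) = (ξ²+η²)^{−α/2} on the rectangle I_{ab}, one has | Θ^{(1,n)}_{I_{(i−1)j}}(ξ_i, η_j) − Θ^{(1,n)}_{I_{ij}}(ξ_i, η_j) | ≤ C h^{4+n} (ξ_i² + η_j²)^{−(1+α)/2}. -/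

import Mathlib

open MeasureTheory Set intervalIntegral

/-- One summand of the generalized Peano kernel `Θ`. -/
noncomputable def Kterm (w : ℝ × ℝ → ℝ) (s t : ℝ) (m n : ℕ) (x y : ℝ) : ℝ :=
  ∫ η in t..y, ∫ ξ in s..x,
    w (ξ, η) * (x - ξ) ^ m * (y - η) ^ n / (m.factorial * n.factorial)

/-- The generalized Peano kernel
`Θ^{(m,n)}_{[a,b]×[c,d]}(x,y) = Σ_{(s,t) ∈ S} ∫_t^y ∫_s^x w(ξ,η) (x-ξ)^m (y-η)^n/(m! n!) dξ dη`,
where `S = {(a,c), (a,d), (b,c), (b,d)}`. -/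
noncomputable def Theta (w : ℝ × ℝ → ℝ) (a b c d : ℝ) (m n : ℕ) (x y : ℝ) : ℝ :=
  Kterm w a c m n x y + Kterm w a d m n x y + Kterm w b c m n x y + Kterm w b d m n x y

/-- The partial derivative `∂_{m,n} f = ∂_x^m ∂_y^n f` of a function of two real variables. -/
noncomputable def pd (m n : ℕ) (f : ℝ × ℝ → ℝ) (p : ℝ × ℝ) : ℝ :=
  deriv^[m] (fun x => deriv^[n] (fun y => f (x, y)) p.2) p.1

/-!
At the common corner `(x, y) = (ξ_i, η_j)` every kernel term whose interval starts at `x` or at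
`y` vanishes, so each of the two `Θ`'s is a single term and their difference is one double
integral of `w(ξ, η) (x - ξ) (y - η)ⁿ / n!` over `[x - h, x + h] × [y, y + h]`. Since `x - ξ` is
odd about `x`, the weight may be replaced by `w(ξ, η) - w(x, η) = O(h · sup |∂_ξ w|)`, which
gains one power of `h` over the trivial bound. On that rectangle `ξ² + η² ≥ (x² + y²) / 5`, and
`|∂_ξ w| ≤ α (ξ² + η²)^{-(1+α)/2}`, which gives the constant `2 α 5^{(1+α)/2}`.
-/

theorem continuousOn_parametric_intervalIntegral_of_continuousOn
    {E : Type*} [NormedAddCommGroup E] [NormedSpace ℝ E] {f : ℝ → ℝ → E} {c d : ℝ}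
    (hf : ContinuousOn (Function.uncurry f) (uIcc c d ×ˢ univ)) (a b : ℝ) :
    ContinuousOn (fun η => ∫ ξ in a..b, f η ξ) (uIcc c d) := by
  -- Clamping `η` to `[c, d]` extends `f` continuously to the whole plane.
  set clamp : ℝ → ℝ := fun η => projIcc (min c d) (max c d) min_le_max η
  have hclamp : Continuous fun p : ℝ × ℝ => (clamp p.1, p.2) :=
    (continuous_subtype_val.comp (continuous_projIcc.comp continuous_fst)).prodMk continuous_snd
  have hext : Continuous (Function.uncurry fun η ξ => f (clamp η) ξ) :=
    hf.comp_continuous hclamp fun p => ⟨Subtype.coe_prop _, mem_univ _⟩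
  refine (continuous_parametric_intervalIntegral_of_continuous' (μ := volume) hext a b)
    |>.continuousOn.congr fun η hη => ?_
  simp only [clamp, projIcc_of_mem _ hη]

theorem Kterm_self_left (w : ℝ × ℝ → ℝ) (t : ℝ) (m n : ℕ) (x y : ℝ) :
    Kterm w x t m n x y = 0 := by
  simp [Kterm]

theorem Kterm_self_right (w : ℝ × ℝ → ℝ) (s : ℝ) (m n : ℕ) (x y : ℝ) :
    Kterm w s y m n x y = 0 := by
  simp [Kterm]

theorem Theta_lower_right (w : ℝ × ℝ → ℝ) (a b c d : ℝ) (m n : ℕ) :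
    Theta w a b c d m n b c = Kterm w a d m n b c := by
  simp [Theta, Kterm_self_left, Kterm_self_right]

theorem Theta_lower_left (w : ℝ × ℝ → ℝ) (a b c d : ℝ) (m n : ℕ) :
    Theta w a b c d m n a c = Kterm w b d m n a c := by
  simp [Theta, Kterm_self_left, Kterm_self_right]

theorem Kterm_sub_Kterm {w : ℝ × ℝ → ℝ} {t y : ℝ} (hw : ContinuousOn w (univ ×ˢ uIcc t y))
    (s₁ s₂ : ℝ) (m n : ℕ) (x : ℝ) :
    Kterm w s₁ t m n x y - Kterm w s₂ t m n x y =
      ∫ η in t..y, ∫ ξ in s₁..s₂,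
        w (ξ, η) * (x - ξ) ^ m * (y - η) ^ n / (m.factorial * n.factorial) := by
  set F : ℝ → ℝ → ℝ := fun η ξ =>
    w (ξ, η) * (x - ξ) ^ m * (y - η) ^ n / (m.factorial * n.factorial)
  have hF : ContinuousOn (Function.uncurry F) (uIcc t y ×ˢ univ) := by
    have hw' : ContinuousOn (fun p : ℝ × ℝ => w (p.2, p.1)) (uIcc t y ×ˢ univ) :=
      hw.comp continuous_swap.continuousOn fun p hp => ⟨mem_univ _, hp.1⟩
    exact ((hw'.mul (by fun_prop)).mul (by fun_prop)).div_const _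
  have hFη : ∀ η ∈ uIcc t y, ∀ a b : ℝ, IntervalIntegrable (F η) volume a b :=
    fun η hη a b => (hF.comp_continuous (continuous_const.prodMk continuous_id)
      fun _ => ⟨hη, mem_univ _⟩).intervalIntegrable a b
  have hint : ∀ s, IntervalIntegrable (fun η => ∫ ξ in s..x, F η ξ) volume t y := fun s =>
    (continuousOn_parametric_intervalIntegral_of_continuousOn hF s x).intervalIntegrable
  rw [Kterm, Kterm, ← integral_sub (hint s₁) (hint s₂)]
  refine integral_congr fun η hη => ?_
  rw [← integral_add_adjacent_intervals (hFη η hη s₁ s₂) (hFη η hη s₂ x)]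
  ring

theorem abs_integral_mul_sub_le {g : ℝ → ℝ} {x h L : ℝ} (hh : 0 ≤ h) (hL : 0 ≤ L)
    (hg : IntervalIntegrable g volume (x - h) (x + h))
    (hLip : ∀ ξ ∈ Icc (x - h) (x + h), |g ξ - g x| ≤ L * |ξ - x|) :
    |∫ ξ in (x - h)..(x + h), g ξ * (x - ξ)| ≤ 2 * L * h ^ 3 := by
  have hodd : ∫ ξ in (x - h)..(x + h), (x - ξ) = 0 := by
    simp only [integral_sub intervalIntegrable_const intervalIntegral.intervalIntegrable_id,
      intervalIntegral.integral_const, integral_id, smul_eq_mul]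
    ring
  have hsplit : ∫ ξ in (x - h)..(x + h), g ξ * (x - ξ) =
      (∫ ξ in (x - h)..(x + h), (g ξ - g x) * (x - ξ)) +
        g x * ∫ ξ in (x - h)..(x + h), (x - ξ) := by
    rw [← intervalIntegral.integral_const_mul, ← intervalIntegral.integral_add]
    · exact integral_congr fun ξ _ => by ring
    · exact (hg.sub intervalIntegrable_const).mul_continuousOn (by fun_prop)
    · exact (continuous_const.mul (by fun_prop)).intervalIntegrable _ _
  have hbound : ∀ ξ ∈ uIoc (x - h) (x + h), ‖(g ξ - g x) * (x - ξ)‖ ≤ L * h * h := by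
    intro ξ hξ
    rw [uIoc_of_le (by linarith)] at hξ
    have hdist : |ξ - x| ≤ h := abs_le.mpr ⟨by linarith [hξ.1], by linarith [hξ.2]⟩
    rw [Real.norm_eq_abs, abs_mul, abs_sub_comm x]
    exact mul_le_mul ((hLip ξ (Ioc_subset_Icc_self hξ)).trans (by gcongr)) hdist
      (abs_nonneg _) (by positivity)
  rw [hsplit, hodd, mul_zero, add_zero, ← Real.norm_eq_abs]
  refine (norm_integral_le_of_norm_le_const hbound).trans (le_of_eq ?_)
  rw [show x + h - (x - h) = 2 * h by ring, abs_of_nonneg (by positivity)]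
  ring

theorem abs_Kterm_sub_Kterm_le {w : ℝ × ℝ → ℝ} {x y h L : ℝ} (n : ℕ) (hh : 0 ≤ h)
    (hL : 0 ≤ L) (hw : ContinuousOn w (univ ×ˢ Icc y (y + h)))
    (hLip : ∀ η ∈ Icc y (y + h), ∀ ξ ∈ Icc (x - h) (x + h),
      |w (ξ, η) - w (x, η)| ≤ L * |ξ - x|) :
    |Kterm w (x - h) (y + h) 1 n x y - Kterm w (x + h) (y + h) 1 n x y| ≤
      2 * L * h ^ (4 + n) := by
  have hIcc : uIcc (y + h) y = Icc y (y + h) := uIcc_of_ge (by linarith)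
  rw [Kterm_sub_Kterm (hIcc ▸ hw), ← Real.norm_eq_abs]
  have hslice : ∀ η ∈ uIoc (y + h) y, ‖∫ ξ in (x - h)..(x + h),
      w (ξ, η) * (x - ξ) ^ 1 * (y - η) ^ n / ((1 : ℕ).factorial * n.factorial)‖ ≤
        h ^ n * (2 * L * h ^ 3) := by
    intro η hη
    have hη' : η ∈ Icc y (y + h) := hIcc ▸ uIoc_subset_uIcc hη
    have hwη : ContinuousOn (fun ξ => w (ξ, η)) (uIcc (x - h) (x + h)) :=
      hw.comp (by fun_prop) fun ξ _ => ⟨mem_univ ξ, hη'⟩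
    set c : ℝ := (y - η) ^ n / ((1 : ℕ).factorial * n.factorial)
    have hcoef : |c| ≤ h ^ n := by
      have hfac : (1 : ℝ) ≤ (1 : ℕ).factorial * n.factorial := by
        exact_mod_cast Nat.mul_pos (Nat.factorial_pos 1) (Nat.factorial_pos n)
      have hdist : |y - η| ≤ h :=
        abs_sub_le_iff.mpr ⟨by linarith [hη'.1], by linarith [hη'.2]⟩
      have hfac_pos : (0 : ℝ) < (1 : ℕ).factorial * n.factorial := by positivity
      rw [abs_div, abs_pow, abs_of_pos hfac_pos]
      exact (div_le_self (by positivity) hfac).trans (pow_le_pow_left₀ (abs_nonneg _) hdist n)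
    rw [integral_congr (g := fun ξ => c * (w (ξ, η) * (x - ξ))) fun ξ _ => by ring,
      intervalIntegral.integral_const_mul, Real.norm_eq_abs, abs_mul]
    exact mul_le_mul hcoef (abs_integral_mul_sub_le hh hL hwη.intervalIntegrable (hLip η hη'))
      (abs_nonneg _) (by positivity)
  refine (norm_integral_le_of_norm_le_const hslice).trans (le_of_eq ?_)
  rw [show y - (y + h) = -h by ring, abs_neg, abs_of_nonneg hh]
  ring

theorem abs_mul_rpow_sq_add_sq_le {ξ η : ℝ} (α : ℝ) (hpos : 0 < ξ ^ 2 + η ^ 2) :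
    |ξ| * (ξ ^ 2 + η ^ 2) ^ (-α / 2 - 1) ≤ (ξ ^ 2 + η ^ 2) ^ (-(1 + α) / 2) := by
  have habs : |ξ| ≤ (ξ ^ 2 + η ^ 2) ^ (1 / 2 : ℝ) := by
    rw [← Real.sqrt_eq_rpow, ← Real.sqrt_sq_eq_abs]
    exact Real.sqrt_le_sqrt (by nlinarith [sq_nonneg η])
  calc |ξ| * (ξ ^ 2 + η ^ 2) ^ (-α / 2 - 1)
      ≤ (ξ ^ 2 + η ^ 2) ^ (1 / 2 : ℝ) * (ξ ^ 2 + η ^ 2) ^ (-α / 2 - 1) := by gcongr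
    _ = (ξ ^ 2 + η ^ 2) ^ (-(1 + α) / 2) := by rw [← Real.rpow_add hpos]; ring_nf

theorem abs_rpow_sq_add_sq_sub_le {α η S₀ : ℝ} {s : Set ℝ} (hα : 0 ≤ α) (hS₀ : 0 < S₀)
    (hs : Convex ℝ s) (hS : ∀ ξ ∈ s, S₀ ≤ ξ ^ 2 + η ^ 2) {ξ₀ ξ₁ : ℝ} (h₀ : ξ₀ ∈ s)
    (h₁ : ξ₁ ∈ s) :
    |(ξ₁ ^ 2 + η ^ 2) ^ (-α / 2) - (ξ₀ ^ 2 + η ^ 2) ^ (-α / 2)| ≤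
      α * S₀ ^ (-(1 + α) / 2) * |ξ₁ - ξ₀| := by
  have hderiv : ∀ ξ ∈ s, HasDerivWithinAt (fun ξ : ℝ => (ξ ^ 2 + η ^ 2) ^ (-α / 2))
      (2 * ξ * (-α / 2) * (ξ ^ 2 + η ^ 2) ^ (-α / 2 - 1)) s ξ := by
    intro ξ hξ
    have hsq : HasDerivAt (fun ξ : ℝ => ξ ^ 2 + η ^ 2) (2 * ξ) ξ := by
      simpa using (hasDerivAt_pow 2 ξ).add_const (η ^ 2)
    exact (hsq.rpow_const (Or.inl (hS₀.trans_le (hS ξ hξ)).ne')).hasDerivWithinAt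
  have hbound : ∀ ξ ∈ s, ‖2 * ξ * (-α / 2) * (ξ ^ 2 + η ^ 2) ^ (-α / 2 - 1)‖ ≤
      α * S₀ ^ (-(1 + α) / 2) := by
    intro ξ hξ
    have hpos : 0 < ξ ^ 2 + η ^ 2 := hS₀.trans_le (hS ξ hξ)
    calc ‖2 * ξ * (-α / 2) * (ξ ^ 2 + η ^ 2) ^ (-α / 2 - 1)‖
        = α * (|ξ| * (ξ ^ 2 + η ^ 2) ^ (-α / 2 - 1)) := by
          rw [Real.norm_eq_abs, abs_mul, abs_mul, abs_mul, abs_div, abs_neg, abs_of_nonneg hα,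
            abs_two, abs_of_pos (Real.rpow_pos_of_pos hpos _)]
          ring
      _ ≤ α * (ξ ^ 2 + η ^ 2) ^ (-(1 + α) / 2) :=
          mul_le_mul_of_nonneg_left (abs_mul_rpow_sq_add_sq_le α hpos) hα
      _ ≤ α * S₀ ^ (-(1 + α) / 2) := by
          have hexp : -(1 + α) / 2 ≤ 0 := by linarith
          exact mul_le_mul_of_nonneg_left (Real.rpow_le_rpow_of_nonpos hS₀ (hS ξ hξ) hexp) hα
  simpa [Real.norm_eq_abs] using
    hs.norm_image_sub_le_of_norm_hasDerivWithin_le hderiv hbound h₀ h₁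

theorem sq_add_sq_le_five_mul {x y h : ℝ} (hy : h ≤ y) (h0 : 0 ≤ h) :
    x ^ 2 + y ^ 2 ≤ 5 * ((x - h) ^ 2 + y ^ 2) := by
  nlinarith [sq_nonneg (2 * (x - h) - h)]

theorem theta_adjacent_difference_bound_general (α : ℝ) (hα0 : 0 < α) :
    ∃ C : ℝ, 0 < C ∧ ∀ h : ℝ, 0 < h → ∀ n : ℕ, n ≤ 1 →
      ∀ i j : ℕ, 1 ≤ i → 1 ≤ j → 3 ≤ i + j →
        |Theta (fun ξ : ℝ × ℝ => (ξ.1 ^ 2 + ξ.2 ^ 2) ^ (-α / 2))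
              (((i : ℝ) - 1) * h) ((i : ℝ) * h) ((j : ℝ) * h) (((j : ℝ) + 1) * h)
              1 n ((i : ℝ) * h) ((j : ℝ) * h)
          - Theta (fun ξ : ℝ × ℝ => (ξ.1 ^ 2 + ξ.2 ^ 2) ^ (-α / 2))
              ((i : ℝ) * h) (((i : ℝ) + 1) * h) ((j : ℝ) * h) (((j : ℝ) + 1) * h)
              1 n ((i : ℝ) * h) ((j : ℝ) * h)|
          ≤ C * h ^ (4 + n) * (((i : ℝ) * h) ^ 2 + ((j : ℝ) * h) ^ 2) ^ (-(1 + α) / 2) := by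
  refine ⟨2 * α * 5 ^ ((1 + α) / 2), by positivity, fun h hh n _ i j hi hj _ => ?_⟩
  set x := (i : ℝ) * h
  set y := (j : ℝ) * h
  have hxh : h ≤ x := le_mul_of_one_le_left hh.le (by exact_mod_cast hi)
  have hyh : h ≤ y := le_mul_of_one_le_left hh.le (by exact_mod_cast hj)
  rw [show ((i : ℝ) - 1) * h = x - h by ring, show ((i : ℝ) + 1) * h = x + h by ring,
    show ((j : ℝ) + 1) * h = y + h by ring, Theta_lower_right, Theta_lower_left]
  set R := x ^ 2 + y ^ 2
  have hR : 0 < R := by positivity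
  have hfar : ∀ η ∈ Icc y (y + h), ∀ ξ ∈ Icc (x - h) (x + h), R / 5 ≤ ξ ^ 2 + η ^ 2 := by
    intro η hη ξ hξ
    have := sq_add_sq_le_five_mul (x := x) hyh hh.le
    nlinarith [hξ.1, hη.1]
  have hcont : ContinuousOn (fun p : ℝ × ℝ => (p.1 ^ 2 + p.2 ^ 2) ^ (-α / 2))
      (univ ×ˢ Icc y (y + h)) :=
    ContinuousOn.rpow_const (by fun_prop) fun p hp =>
      Or.inl (by nlinarith [hp.2.1, sq_nonneg p.1])
  calc _ ≤ 2 * (α * (R / 5) ^ (-(1 + α) / 2)) * h ^ (4 + n) :=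
        abs_Kterm_sub_Kterm_le n hh.le (by positivity) hcont fun η hη ξ hξ =>
          abs_rpow_sq_add_sq_sub_le hα0.le (by positivity) (convex_Icc _ _) (hfar η hη)
            ⟨by linarith, by linarith⟩ hξ
    _ = 2 * α * 5 ^ ((1 + α) / 2) * h ^ (4 + n) * R ^ (-(1 + α) / 2) := by
        rw [Real.div_rpow hR.le (by norm_num), div_eq_mul_inv, ← Real.rpow_neg (by norm_num),
          neg_div, neg_neg]
        ring

/-- **Difference of Peano kernels on adjacent grid cells.** For the weight
`w(ξ,η) = (ξ²+η²)^{-α/2}` with `α ∈ (0,2)`, there is `C > 0` depending only on `α` such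
that for every mesh size `h > 0`, every `n ∈ {0,1}`, and all `i, j ≥ 1` with `i + j ≥ 3`,
`|Θ^{(1,n)}_{I_{(i-1)j}}(ξ_i, η_j) - Θ^{(1,n)}_{I_{ij}}(ξ_i, η_j)| ≤ C h^{4+n} (ξ_i²+η_j²)^{-(1+α)/2}`. -/
theorem theta_adjacent_difference_bound (α : ℝ) (hα0 : 0 < α) (hα2 : α < 2) :
    ∃ C : ℝ, 0 < C ∧ ∀ h : ℝ, 0 < h → ∀ n : ℕ, n ≤ 1 →
      ∀ i j : ℕ, 1 ≤ i → 1 ≤ j → 3 ≤ i + j →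
        |Theta (fun ξ : ℝ × ℝ => (ξ.1 ^ 2 + ξ.2 ^ 2) ^ (-α / 2))
              (((i : ℝ) - 1) * h) ((i : ℝ) * h) ((j : ℝ) * h) (((j : ℝ) + 1) * h)
              1 n ((i : ℝ) * h) ((j : ℝ) * h)
          - Theta (fun ξ : ℝ × ℝ => (ξ.1 ^ 2 + ξ.2 ^ 2) ^ (-α / 2))
              ((i : ℝ) * h) (((i : ℝ) + 1) * h) ((j : ℝ) * h) (((j : ℝ) + 1) * h)
              1 n ((i : ℝ) * h) ((j : ℝ) * h)|
          ≤ C * h ^ (4 + n) * (((i : ℝ) * h) ^ 2 + ((j : ℝ) * h) ^ 2) ^ (-(1 + α) / 2) :=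
  theta_adjacent_difference_bound_general α hα0
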